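/- Let n ≥ 1 and let m = p₁·p₂·⋯·p_l be a squarefree positive integer with p₁, …, p_l distinct primes. The number of sublattices Λ of ℤ^n such that ℤ^n/Λ is a cyclic group of order m equals ∏_{k=1}^{l} (p_k^n − 1)/(p_k − 1). -/

import Mathlib

/-!
A sublattice `Λ` with `ℤⁿ/Λ` cyclic of order `m` is the kernel of a surjection `ℤⁿ → ℤ/m`,
and two such surjections have the same kernel iff they differ by a unit of `ℤ/m`; hence the
number of lattices is `#{surjections ℤⁿ → ℤ/m} / φ(m)`. For `m = p₁ ⋯ p_l` the Chinese remainder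
theorem splits a surjection into surjections `ℤⁿ → 𝔽_{p_k}`, i.e. nonzero vectors of `𝔽_{p_k}ⁿ`,
of which there are `p_kⁿ - 1`, while `φ(m) = ∏ (p_k - 1)`.
-/

open Function LinearMap

theorem Nat.card_subtype_ne {α : Type*} [Finite α] (a : α) :
    Nat.card {x // x ≠ a} = Nat.card α - 1 := by
  classical
  have := Fintype.ofFinite α
  rw [Nat.card_eq_fintype_card, Fintype.card_subtype_compl, Fintype.card_subtype_eq,
    Nat.card_eq_fintype_card]

section
variable {M : Type*} [AddCommGroup M] {m : ℕ}

theorem exists_eq_mul_of_ker_le {f g : M →ₗ[ℤ] ZMod m} (hg : Surjective g)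
    (hker : ker g ≤ ker f) : ∃ a : ZMod m, ∀ x, f x = a * g x := by
  obtain ⟨x₀, hx₀⟩ := hg 1
  refine ⟨f x₀, fun x => ?_⟩
  have hx : x - ((g x).cast : ℤ) • x₀ ∈ ker g := by simp [hx₀]
  have := hker hx
  simp only [mem_ker, map_sub, map_zsmul, sub_eq_zero] at this
  rw [this, zsmul_eq_mul, ZMod.intCast_zmod_cast, mul_comm]

theorem isAddCyclic_quotient_and_card_eq_iff (Λ : Submodule ℤ M) :
    (IsAddCyclic (M ⧸ Λ) ∧ Nat.card (M ⧸ Λ) = m) ↔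
      ∃ f : M →ₗ[ℤ] ZMod m, Surjective f ∧ ker f = Λ := by
  constructor
  · rintro ⟨hcyc, rfl⟩
    let e : (M ⧸ Λ) ≃ₗ[ℤ] ZMod (Nat.card (M ⧸ Λ)) :=
      (zmodAddCyclicAddEquiv hcyc).symm.toIntLinearEquiv
    refine ⟨e.toLinearMap ∘ₗ Λ.mkQ, e.surjective.comp Λ.mkQ_surjective, ?_⟩
    rw [LinearEquiv.ker_comp, Submodule.ker_mkQ]
  · rintro ⟨f, hf, rfl⟩
    let e := f.quotKerEquivOfSurjective hf
    exact ⟨isAddCyclic_of_surjective e.symm.toAddMonoidHom e.symm.surjective,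
      (Nat.card_congr e.toEquiv).trans (Nat.card_zmod m)⟩

theorem ker_units_smul (u : (ZMod m)ˣ) (f : M →ₗ[ℤ] ZMod m) : ker (u • f) = ker f := by
  ext x
  simp [Units.smul_def]

theorem surjective_units_smul_iff (u : (ZMod m)ˣ) (f : M →ₗ[ℤ] ZMod m) :
    Surjective (u • f) ↔ Surjective f :=
  (MulAction.toPerm u).comp_surjective f

theorem exists_units_smul_eq_of_ker_eq {f g : M →ₗ[ℤ] ZMod m} (hf : Surjective f)
    (hg : Surjective g) (hker : ker g = ker f) : ∃ u : (ZMod m)ˣ, u • g = f := by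
  obtain ⟨a, ha⟩ := exists_eq_mul_of_ker_le hg hker.le
  obtain ⟨y, hy⟩ := hf 1
  have hunit : IsUnit a := .of_mul_eq_one (g y) (by rw [← ha, hy])
  exact ⟨hunit.unit, LinearMap.ext fun x => (ha x).symm⟩

theorem card_surjective_eq_card_mul_card_units :
    Nat.card {f : M →ₗ[ℤ] ZMod m // Surjective f} =
      Nat.card {Λ : Submodule ℤ M // IsAddCyclic (M ⧸ Λ) ∧ Nat.card (M ⧸ Λ) = m} *
        Nat.card (ZMod m)ˣ := by
  simp_rw [isAddCyclic_quotient_and_card_eq_iff, ← Nat.card_prod]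
  choose c hc_surj hc_ker using fun Λ : {Λ : Submodule ℤ M // ∃ f : M →ₗ[ℤ] ZMod m,
    Surjective f ∧ ker f = Λ} => Λ.2
  refine Nat.card_congr (Equiv.ofBijective (fun t => ⟨t.2 • c t.1,
    (surjective_units_smul_iff _ _).2 (hc_surj t.1)⟩) ⟨?_, ?_⟩).symm
  · rintro ⟨Λ, u⟩ ⟨Λ', u'⟩ h
    have h' : u • c Λ = u' • c Λ' := congrArg Subtype.val h
    obtain rfl : Λ = Λ' := Subtype.ext <| by
      rw [← hc_ker, ← hc_ker, ← ker_units_smul u, ← ker_units_smul u' (c Λ'), h']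
    obtain ⟨x, hx⟩ := hc_surj Λ 1
    have := LinearMap.congr_fun h' x
    simp only [LinearMap.smul_apply, hx, Units.smul_def, smul_eq_mul, mul_one] at this
    rw [Units.ext this]
  · rintro ⟨f, hf⟩
    let Λ : {Λ : Submodule ℤ M // ∃ f : M →ₗ[ℤ] ZMod m, Surjective f ∧ ker f = Λ} :=
      ⟨ker f, f, hf, rfl⟩
    obtain ⟨u, hu⟩ := exists_units_smul_eq_of_ker_eq hf (hc_surj Λ) (hc_ker Λ)
    exact ⟨(Λ, u), Subtype.ext hu⟩

theorem surjective_iff_ne_zero_of_prime {q : ℕ} [Fact q.Prime] (f : M →ₗ[ℤ] ZMod q) :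
    Surjective f ↔ f ≠ 0 := by
  rw [← range_eq_top, ne_eq, ← range_eq_bot, ← Submodule.toAddSubgroup_inj,
    ← Submodule.toAddSubgroup_inj, Submodule.top_toAddSubgroup, Submodule.bot_toAddSubgroup]
  rcases IsSimpleAddGroup.eq_bot_or_eq_top_of_normal (range f).toAddSubgroup inferInstance
    with h | h <;> simp [h]

theorem card_surjective_zmod_prime {ι : Type*} [Finite ι] (b : Module.Basis ι ℤ M) (q : ℕ)
    [Fact q.Prime] :
    Nat.card {f : M →ₗ[ℤ] ZMod q // Surjective f} = q ^ Nat.card ι - 1 := by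
  have e := (b.constr ℤ : (ι → ZMod q) ≃ₗ[ℤ] (M →ₗ[ℤ] ZMod q)).toEquiv
  have : Finite (M →ₗ[ℤ] ZMod q) := .of_equiv _ e
  simp_rw [surjective_iff_ne_zero_of_prime]
  rw [Nat.card_subtype_ne, ← Nat.card_congr e, Nat.card_fun, Nat.card_zmod]

end

theorem AddSubgroup.eq_top_of_surjective_eval {ι : Type*} [Fintype ι] {G : ι → Type*}
    [∀ i, AddGroup (G i)] [∀ i, Finite (G i)]
    (hcop : Pairwise (Nat.Coprime on fun i => Nat.card (G i))) (H : AddSubgroup (∀ i, G i))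
    (hH : ∀ i, Surjective fun x : H => (x : ∀ i, G i) i) : H = ⊤ := by
  have hdvd : ∀ i, Nat.card (G i) ∣ Nat.card H := fun i =>
    AddSubgroup.card_dvd_of_surjective ((Pi.evalAddMonoidHom G i).comp H.subtype) (hH i)
  have hprod : ∏ i, Nat.card (G i) ∣ Nat.card H := by
    rw [← Int.natCast_dvd_natCast, Nat.cast_prod]
    exact Fintype.prod_dvd_of_coprime (fun i j hij => Nat.isCoprime_iff_coprime.2 (hcop hij))
      fun i => Int.natCast_dvd_natCast.2 (hdvd i)
  refine H.eq_top_of_card_eq (Nat.dvd_antisymm H.card_addSubgroup_dvd_card ?_)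
  rwa [Nat.card_pi]

section
variable {M : Type*} [AddCommGroup M] {ι : Type*} [Fintype ι] {G : ι → Type*}
  [∀ i, AddCommGroup (G i)] [∀ i, Finite (G i)]

theorem surjective_iff_forall_surjective_proj_comp
    (hcop : Pairwise (Nat.Coprime on fun i => Nat.card (G i))) (g : M →ₗ[ℤ] ∀ i, G i) :
    Surjective g ↔ ∀ i, Surjective (proj i ∘ₗ g) := by
  refine ⟨fun hg i => (surjective_eval i).comp hg, fun h => ?_⟩
  rw [← range_eq_top, ← Submodule.toAddSubgroup_inj, Submodule.top_toAddSubgroup]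
  refine AddSubgroup.eq_top_of_surjective_eval hcop _ fun i y => ?_
  obtain ⟨x, hx⟩ := h i y
  exact ⟨⟨g x, mem_range_self g x⟩, hx⟩

theorem card_surjective_pi (hcop : Pairwise (Nat.Coprime on fun i => Nat.card (G i))) :
    Nat.card {g : M →ₗ[ℤ] ∀ i, G i // Surjective g} =
      ∏ i, Nat.card {f : M →ₗ[ℤ] G i // Surjective f} := by
  let e : (M →ₗ[ℤ] ∀ i, G i) ≃ ∀ i, M →ₗ[ℤ] G i :=
    { toFun g i := proj i ∘ₗ g
      invFun := pi
      left_inv _ := rfl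
      right_inv _ := rfl }
  rw [← Nat.card_pi, ← Nat.card_congr Equiv.subtypePiEquivPi]
  exact Nat.card_congr (e.subtypeEquiv (surjective_iff_forall_surjective_proj_comp hcop))

end

theorem pairwise_coprime_of_prime {κ : Type*} {p : κ → ℕ} (hp : ∀ k, (p k).Prime)
    (hinj : Injective p) : Pairwise (Nat.Coprime on p) := fun _ _ hij =>
  (Nat.coprime_primes (hp _) (hp _)).2 (hinj.ne hij)

section
variable {M : Type*} [AddCommGroup M] {κ : Type*} [Fintype κ] {p : κ → ℕ}

theorem card_surjective_zmod_prod {ι : Type*} [Finite ι] (b : Module.Basis ι ℤ M)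
    (hp : ∀ k, (p k).Prime) (hinj : Injective p) :
    Nat.card {f : M →ₗ[ℤ] ZMod (∏ k, p k) // Surjective f} = ∏ k, (p k ^ Nat.card ι - 1) := by
  have : ∀ k, Fact (p k).Prime := fun k => ⟨hp k⟩
  have hcop := pairwise_coprime_of_prime hp hinj
  let e : ZMod (∏ k, p k) ≃ₗ[ℤ] ∀ k, ZMod (p k) :=
    (ZMod.prodEquivPi p hcop).toAddEquiv.toIntLinearEquiv
  have hsurj (f : M →ₗ[ℤ] ZMod (∏ k, p k)) :
      Surjective f ↔ Surjective (e.congrRight f) :=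
    (e.toEquiv.comp_surjective f).symm
  rw [Nat.card_congr (Equiv.subtypeEquiv (q := fun g : M →ₗ[ℤ] ∀ k, ZMod (p k) => Surjective g)
      e.congrRight.toEquiv hsurj),
    card_surjective_pi (by simpa only [Nat.card_zmod] using hcop)]
  exact Finset.prod_congr rfl fun k _ => card_surjective_zmod_prime b (p k)

theorem card_units_zmod_prod (hp : ∀ k, (p k).Prime) (hinj : Injective p) :
    Nat.card (ZMod (∏ k, p k))ˣ = ∏ k, (p k - 1) := by
  have : ∀ k, Fact (p k).Prime := fun k => ⟨hp k⟩
  rw [Nat.card_congr ((Units.mapEquiv (ZMod.prodEquivPi p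
    (pairwise_coprime_of_prime hp hinj)).toMulEquiv).trans MulEquiv.piUnits).toEquiv,
    Nat.card_pi]
  exact Finset.prod_congr rfl fun k _ => by rw [Nat.card_eq_fintype_card, ZMod.card_units]

end

theorem stmt16_general (n : ℕ) (l : ℕ) (p : Fin l → ℕ)
    (hp : ∀ k, (p k).Prime) (hinj : Function.Injective p) :
    Nat.card {Λ : Submodule ℤ (Fin n → ℤ) //
        IsAddCyclic ((Fin n → ℤ) ⧸ Λ) ∧ Nat.card ((Fin n → ℤ) ⧸ Λ) = ∏ k, p k} =
      ∏ k, (p k ^ n - 1) / (p k - 1) := by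
  have hcount := card_surjective_eq_card_mul_card_units (M := Fin n → ℤ) (m := ∏ k, p k)
  rw [card_surjective_zmod_prod (Pi.basisFun ℤ (Fin n)) hp hinj, Nat.card_fin,
    card_units_zmod_prod hp hinj] at hcount
  have hpos : 0 < ∏ k, (p k - 1) := Finset.prod_pos fun k _ => Nat.sub_pos_of_lt (hp k).one_lt
  refine Nat.eq_of_mul_eq_mul_right hpos (hcount.symm.trans ?_)
  rw [← Finset.prod_mul_distrib]
  refine Finset.prod_congr rfl fun k _ => (Nat.div_mul_cancel ?_).symm
  simpa using Nat.sub_dvd_pow_sub_pow (p k) 1 n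

/-- Let n ≥ 1 and m = p₁⋯p_l squarefree with p₁, …, p_l distinct primes. The
number of sublattices Λ of ℤ^n with ℤ^n/Λ cyclic of order m equals ∏_k (p_k^n − 1)/(p_k − 1). -/
theorem stmt16 (n : ℕ) (hn : 1 ≤ n) (l : ℕ) (p : Fin l → ℕ)
    (hp : ∀ k, (p k).Prime) (hinj : Function.Injective p) :
    Nat.card {Λ : Submodule ℤ (Fin n → ℤ) //
        IsAddCyclic ((Fin n → ℤ) ⧸ Λ) ∧ Nat.card ((Fin n → ℤ) ⧸ Λ) = ∏ k, p k} =
      ∏ k, (p k ^ n - 1) / (p k - 1) :=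
  stmt16_general n l p hp hinj
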